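/- arXiv:1609.04594 — 2 statements merged into one kernel-verified Lean document; each statement's English description precedes it below -/
import Mathlib

section
/- If a discrete form Ω : ℤ⁴ → Cl satisfies the discrete Hestenes equation −(DΩ)e₁e₂ = mΩe₀, then the form Ωe₂e₃ satisfies the same equation with the sign of the mass term reversed: −(D(Ωe₂e₃))e₁e₂ = −m(Ωe₂e₃)e₀. -/
noncomputable section

/-- The Minkowski quadratic form `Q v = v₀² − v₁² − v₂² − v₃²` on `ℂ⁴`. -/
def Q : QuadraticForm ℂ (Fin 4 → ℂ) :=
  QuadraticMap.weightedSumSquares ℂ ![(1 : ℂ), -1, -1, -1]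

/-- The Clifford algebra of spacetime over `ℂ`. -/
abbrev Cl : Type := CliffordAlgebra Q

/-- The generators `e_μ`, images of the standard basis vectors. -/
def e (μ : Fin 4) : Cl := CliffordAlgebra.ι Q (Pi.single μ 1)

/-- The volume element `e = e₀e₁e₂e₃`. -/
def eV : Cl := e 0 * e 1 * e 2 * e 3

/-- The difference operator `(Δ_μ Ω)(k) = Ω(k + 1_μ) − Ω(k)`. -/
def Δ (μ : Fin 4) (Ω : (Fin 4 → ℤ) → Cl) : (Fin 4 → ℤ) → Cl :=
  fun k => Ω (k + Pi.single μ 1) - Ω k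

/-- The discrete Dirac operator `DΩ = Σ_μ e_μ · (Δ_μ Ω)`. -/
def Dirac (Ω : (Fin 4 → ℤ) → Cl) : (Fin 4 → ℤ) → Cl :=
  fun k => ∑ μ : Fin 4, e μ * Δ μ Ω k

/-!
The Dirac operator multiplies by the `e_μ` on the left, so it commutes with right multiplication
by the bivector `e₂e₃`. Moving `e₂e₃` past `e₁e₂` costs a sign (they share exactly one generator),
while it commutes with `e₀` (two anticommutations), so only the kinetic side of the equation
changes sign.
-/

open QuadraticMap CliffordAlgebra

theorem QuadraticMap.isOrtho_weightedSumSquares_single {R ι : Type*} [CommSemiring R] [Fintype ι]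
    [DecidableEq ι] (w : ι → R) {i j : ι} (hij : i ≠ j) (a b : R) :
    (weightedSumSquares R w).IsOrtho (Pi.single i a) (Pi.single j b) := by
  have hmul : ∀ l, (Pi.single i a : ι → R) l * (Pi.single j b : ι → R) l = 0 := by
    intro l
    by_cases hl : l = i
    · subst hl
      simp [hij]
    · simp [hl]
  simp only [isOrtho_def, weightedSumSquares_apply, ← Finset.sum_add_distrib, ← smul_add]
  refine Finset.sum_congr rfl fun l _ => ?_
  rw [Pi.add_apply, add_mul_self_eq, mul_assoc, hmul, mul_zero, add_zero]

theorem e_semiconjBy_neg_e {μ ν : Fin 4} (h : μ ≠ ν) : SemiconjBy (e μ) (e ν) (-e ν) := by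
  rw [SemiconjBy, neg_mul]
  exact ι_mul_ι_comm_of_isOrtho (isOrtho_weightedSumSquares_single _ h 1 1)

theorem commute_e_e_mul_e {μ ν ρ : Fin 4} (hμν : μ ≠ ν) (hμρ : μ ≠ ρ) :
    Commute (e μ) (e ν * e ρ) := by
  have h := (e_semiconjBy_neg_e hμν).mul_right (e_semiconjBy_neg_e hμρ)
  rwa [neg_mul_neg] at h

theorem semiconjBy_e_mul_e_neg {μ ν ρ : Fin 4} (hμν : μ ≠ ν) (hμρ : μ ≠ ρ) (hνρ : ν ≠ ρ) :
    SemiconjBy (e ν * e ρ) (e μ * e ν) (-(e μ * e ν)) := by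
  have hν : SemiconjBy (e ν * e ρ) (e ν) (-e ν) :=
    SemiconjBy.mul_left (Commute.refl (e ν)).neg_right (e_semiconjBy_neg_e hνρ.symm)
  simpa only [mul_neg] using SemiconjBy.mul_right (commute_e_e_mul_e hμν hμρ).symm hν

theorem Dirac_mul_right (Ω : (Fin 4 → ℤ) → Cl) (c : Cl) (k : Fin 4 → ℤ) :
    Dirac (fun k => Ω k * c) k = Dirac Ω k * c := by
  simp only [Dirac, Δ, Finset.sum_mul, sub_mul, mul_assoc]

/-- If `Ω` satisfies the discrete Hestenes equation `−(DΩ)e₁e₂ = mΩe₀`, then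
`Ωe₂e₃` satisfies it with the sign of the mass term reversed. -/
theorem stmt_9 (m : ℝ) (Ω : (Fin 4 → ℤ) → Cl)
    (hΩ : ∀ k, -(Dirac Ω k * (e 1 * e 2)) = (m : ℂ) • (Ω k * e 0)) :
    ∀ k, -(Dirac (fun k => Ω k * (e 2 * e 3)) k * (e 1 * e 2)) =
      -((m : ℂ) • ((Ω k * (e 2 * e 3)) * e 0)) := by
  intro k
  have hanti := semiconjBy_e_mul_e_neg (μ := 1) (ν := 2) (ρ := 3) (by decide) (by decide) (by decide)
  have hcomm := commute_e_e_mul_e (μ := 0) (ν := 2) (ρ := 3) (by decide) (by decide)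
  calc -(Dirac (fun k => Ω k * (e 2 * e 3)) k * (e 1 * e 2))
      = Dirac Ω k * (e 1 * e 2) * (e 2 * e 3) := by
        rw [Dirac_mul_right, mul_assoc, hanti.eq, neg_mul, mul_neg, neg_neg, ← mul_assoc]
    _ = -((m : ℂ) • (Ω k * e 0)) * (e 2 * e 3) := by rw [← hΩ k, neg_neg]
    _ = -((m : ℂ) • (Ω k * (e 2 * e 3) * e 0)) := by
        rw [neg_mul, smul_mul_assoc, mul_assoc, hcomm.eq, ← mul_assoc]
end
end

section
/- (Proposition 3.10) Let Ω : ℤ⁴ → Cl be a discrete form satisfying the discrete Dirac–Kähler equation iDΩ = mΩ, and suppose Ω(k) = A(k) + i·B(k) pointwise with A and B real-valued forms. Define Ω₊ := A − B·e and Ω₋ := A + B·e. Then Ω = ½(Ω₊ + Ω₋) + (i/2)(Ω₊ − Ω₋)e; moreover the real-valued forms Ω₋ and Ω₋e satisfy equation (3.17): −DΩ₋ = mΩ₋e and −D(Ω₋e) = m(Ω₋e)e, while the real-valued forms Ω₊ and Ω₊e satisfy the same equation with the sign of the mass term reversed: −DΩ₊ = −mΩ₊e and −D(Ω₊e) = −m(Ω₊e)e.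 -/
/-!
The real subalgebra `Cl_ℝ` generated by the `e_μ` is a real form of `Cl`: `e_μ ↦ 1 ⊗ e_μ` extends to
an algebra map `Cl → ℂ ⊗[ℝ] Cl_ℝ` that is `x ↦ 1 ⊗ x` on `Cl_ℝ`, so real and imaginary parts of
`iD(A + iB) = m(A + iB)` separate into `DA = mB` and `DB = -mA`. As `D` commutes with right
multiplication by `e` and `e² = -1`, this gives `D(A ± Be) = mB ∓ mAe = ∓m(A ± Be)e`, and
multiplying once more by `e` on the right gives the equations for `Ω_± e`.
-/

noncomputable section

open TensorProduct

theorem QuadraticMap.mul_self_eq_algebraMap_of_basis {ι R M A : Type*} [CommRing R]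
    [Invertible (2 : R)] [AddCommGroup M] [Module R M] [Ring A] [Algebra R A]
    (Q : QuadraticForm R M) (b : Module.Basis ι R M) (f : M →ₗ[R] A)
    (hf : ∀ i j, f (b i) * f (b j) + f (b j) * f (b i) = algebraMap R A (polar Q (b i) (b j)))
    (v : M) : f v * f v = algebraMap R A (Q v) := by
  have hB : (LinearMap.mul R A).compl₁₂ f f + ((LinearMap.mul R A).compl₁₂ f f).flip
      = (polarBilin Q).compr₂ (Algebra.linearMap R A) :=
    LinearMap.ext_basis b b fun i j => by simpa using hf i j
  have h2 : (2 : R) • (f v * f v) = (2 : R) • algebraMap R A (Q v) := by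
    have := LinearMap.congr_fun₂ hB v v
    simp only [LinearMap.add_apply, LinearMap.compl₁₂_apply, LinearMap.mul_apply',
      LinearMap.flip_apply, LinearMap.compr₂_apply, polarBilin_apply_apply, polar_self,
      Algebra.linearMap_apply] at this
    rw [two_smul, this, nsmul_eq_mul, Nat.cast_ofNat, map_mul, Algebra.smul_def]
  simpa [smul_smul] using congrArg ((⅟2 : R) • ·) h2

def η (μ ν : Fin 4) : ℝ := if μ = ν then ![1, -1, -1, -1] μ else 0

theorem Q_single (μ : Fin 4) : Q (Pi.single μ 1) = (η μ μ : ℂ) := by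
  fin_cases μ <;> simp [Q, η, QuadraticMap.weightedSumSquares_apply, Fin.sum_univ_four]

theorem e_mul_self (μ : Fin 4) : e μ * e μ = algebraMap ℝ Cl (η μ μ) := by
  rw [e, CliffordAlgebra.ι_sq_scalar, Q_single, IsScalarTower.algebraMap_apply ℝ ℂ Cl]
  rfl

theorem polar_Q_single (μ ν : Fin 4) :
    QuadraticMap.polar Q (Pi.single μ 1) (Pi.single ν 1) = ((2 * η μ ν : ℝ) : ℂ) := by
  fin_cases μ <;> fin_cases ν <;>
    simp [QuadraticMap.polar, Q, η, QuadraticMap.weightedSumSquares_apply, Fin.sum_univ_four] <;>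
    norm_num

theorem e_mul_e_add_swap (μ ν : Fin 4) : e μ * e ν + e ν * e μ = algebraMap ℝ Cl (2 * η μ ν) := by
  rw [e, e, CliffordAlgebra.ι_mul_ι_add_swap, polar_Q_single, IsScalarTower.algebraMap_apply ℝ ℂ Cl]
  rfl

theorem e_mul_e_mul_of_lt {μ ν : Fin 4} (h : ν < μ) (x : Cl) :
    e μ * (e ν * x) = -(e ν * (e μ * x)) := by
  have := e_mul_e_add_swap μ ν
  simp only [η, h.ne', if_false, mul_zero, map_zero] at this
  rw [← mul_assoc, eq_neg_of_add_eq_zero_left this, neg_mul, mul_assoc]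

theorem eV_mul_eV : eV * eV = -1 := by
  simp [eV, mul_assoc, e_mul_e_mul_of_lt, e_mul_self, η]

abbrev realCl : Subalgebra ℝ Cl := Algebra.adjoin ℝ (Set.range e)

theorem eV_mem : eV ∈ realCl := by
  refine Subalgebra.mul_mem _ (Subalgebra.mul_mem _ (Subalgebra.mul_mem _ ?_ ?_) ?_) ?_ <;>
    exact Algebra.subset_adjoin ⟨_, rfl⟩

def eReal (μ : Fin 4) : realCl := ⟨e μ, Algebra.subset_adjoin ⟨μ, rfl⟩⟩

def complexifyLinear : (Fin 4 → ℂ) →ₗ[ℂ] ℂ ⊗[ℝ] realCl :=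
  (Pi.basisFun ℂ (Fin 4)).constr ℂ fun μ => 1 ⊗ₜ eReal μ

theorem complexifyLinear_single (μ : Fin 4) : complexifyLinear (Pi.single μ 1) = 1 ⊗ₜ eReal μ := by
  rw [← Pi.basisFun_apply ℂ, complexifyLinear, Module.Basis.constr_basis]

theorem complexifyLinear_mul_self (v : Fin 4 → ℂ) :
    complexifyLinear v * complexifyLinear v = algebraMap ℂ _ (Q v) := by
  refine QuadraticMap.mul_self_eq_algebraMap_of_basis Q (Pi.basisFun ℂ (Fin 4)) _ (fun μ ν => ?_) v
  have h : eReal μ * eReal ν + eReal ν * eReal μ = algebraMap ℝ realCl (2 * η μ ν) :=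
    Subtype.ext (e_mul_e_add_swap μ ν)
  simp only [Pi.basisFun_apply, complexifyLinear_single, Algebra.TensorProduct.tmul_mul_tmul,
    mul_one, ← tmul_add, h, polar_Q_single,
    Algebra.algebraMap_eq_smul_one, ← smul_tmul, Complex.real_smul, mul_one]
  rw [Algebra.TensorProduct.one_def, smul_tmul', smul_eq_mul, mul_one]

def complexify : Cl →ₐ[ℂ] ℂ ⊗[ℝ] realCl :=
  CliffordAlgebra.lift Q ⟨complexifyLinear, complexifyLinear_mul_self⟩

theorem complexify_e (μ : Fin 4) : complexify (e μ) = 1 ⊗ₜ eReal μ := by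
  rw [complexify, e, CliffordAlgebra.lift_ι_apply]
  exact complexifyLinear_single μ

theorem complexify_of_mem {x : Cl} (hx : x ∈ realCl) : complexify x = 1 ⊗ₜ ⟨x, hx⟩ := by
  have : (complexify.restrictScalars ℝ).comp realCl.val = Algebra.TensorProduct.includeRight := by
    refine AlgHom.adjoin_ext ?_
    rintro _ ⟨μ, rfl⟩
    exact complexify_e μ
  exact congrArg (· ⟨x, hx⟩) this

theorem TensorProduct.eq_zero_of_one_tmul_add_I_tmul_eq_zero {M : Type*} [AddCommGroup M]
    [Module ℝ M] {a b : M} (h : (1 : ℂ) ⊗ₜ[ℝ] a + Complex.I ⊗ₜ[ℝ] b = 0) : a = 0 ∧ b = 0 :=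
  ⟨by simpa using congrArg (lift ((LinearMap.lsmul ℝ M).comp Complex.reLm)) h,
   by simpa using congrArg (lift ((LinearMap.lsmul ℝ M).comp Complex.imLm)) h⟩

theorem eq_zero_of_add_I_smul_eq_zero {x y : Cl} (hx : x ∈ realCl) (hy : y ∈ realCl)
    (h : x + Complex.I • y = 0) : x = 0 ∧ y = 0 := by
  have h' : (1 : ℂ) ⊗ₜ[ℝ] (⟨x, hx⟩ : realCl) + Complex.I ⊗ₜ[ℝ] (⟨y, hy⟩ : realCl) = 0 := by
    have := congrArg complexify h
    rwa [map_add, map_smul, map_zero, complexify_of_mem hx, complexify_of_mem hy, smul_tmul',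
      smul_eq_mul, mul_one] at this
  obtain ⟨hx0, hy0⟩ := TensorProduct.eq_zero_of_one_tmul_add_I_tmul_eq_zero h'
  exact ⟨congrArg Subtype.val hx0, congrArg Subtype.val hy0⟩

section Dirac

variable (X Y : (Fin 4 → ℤ) → Cl) (k : Fin 4 → ℤ)

theorem Dirac_add : Dirac (fun k => X k + Y k) k = Dirac X k + Dirac Y k := by
  simp only [Dirac, Δ, ← Finset.sum_add_distrib, ← mul_add]
  congr! 2
  abel

theorem Dirac_sub : Dirac (fun k => X k - Y k) k = Dirac X k - Dirac Y k := by
  simp only [Dirac, Δ, ← Finset.sum_sub_distrib, ← mul_sub]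
  congr! 2
  abel

theorem Dirac_smul (c : ℂ) : Dirac (fun k => c • X k) k = c • Dirac X k := by
  simp only [Dirac, Δ, Finset.smul_sum, ← smul_sub, mul_smul_comm]

theorem Dirac_mul_const (c : Cl) : Dirac (fun k => X k * c) k = Dirac X k * c := by
  simp only [Dirac, Δ, Finset.sum_mul, sub_mul, mul_assoc]

theorem Dirac_mem (hX : ∀ k, X k ∈ realCl) : Dirac X k ∈ realCl :=
  Subalgebra.sum_mem _ fun μ _ =>
    Subalgebra.mul_mem _ (Algebra.subset_adjoin ⟨μ, rfl⟩) (Subalgebra.sub_mem _ (hX _) (hX _))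

end Dirac

theorem Dirac_eq_smul_of_I_smul_Dirac_eq_smul {m : ℝ} {A B : (Fin 4 → ℤ) → Cl}
    (hA : ∀ k, A k ∈ realCl) (hB : ∀ k, B k ∈ realCl)
    (h : ∀ k, Complex.I • Dirac (fun k => A k + Complex.I • B k) k
      = (m : ℂ) • (A k + Complex.I • B k)) (k : Fin 4 → ℤ) :
    Dirac A k = (m : ℂ) • B k ∧ Dirac B k = -((m : ℂ) • A k) := by
  have hsplit : (-Dirac B k - (m : ℂ) • A k) + Complex.I • (Dirac A k - (m : ℂ) • B k) = 0 := by
    rw [← sub_eq_zero.mpr (h k), Dirac_add, Dirac_smul]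
    match_scalars <;> simp [mul_comm]
  have hreal {x : Cl} (hx : x ∈ realCl) : (m : ℂ) • x ∈ realCl := by
    rw [Complex.coe_smul]
    exact Subalgebra.smul_mem _ hx m
  obtain ⟨hre, him⟩ := eq_zero_of_add_I_smul_eq_zero
    (Subalgebra.sub_mem _ (Subalgebra.neg_mem _ (Dirac_mem B k hB)) (hreal (hA k)))
    (Subalgebra.sub_mem _ (Dirac_mem A k hA) (hreal (hB k))) hsplit
  exact ⟨sub_eq_zero.mp him, by rw [← sub_eq_zero.mp hre, neg_neg]⟩

section MassSign

variable {c : ℂ} {A B : (Fin 4 → ℤ) → Cl}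

theorem neg_Dirac_add_mul_eV (hA : ∀ k, Dirac A k = c • B k) (hB : ∀ k, Dirac B k = -(c • A k))
    (k : Fin 4 → ℤ) : -Dirac (fun k => A k + B k * eV) k = c • ((A k + B k * eV) * eV) := by
  rw [Dirac_add, Dirac_mul_const, hA, hB]
  simp only [add_mul, mul_assoc, eV_mul_eV, mul_neg_one, neg_mul, smul_mul_assoc, smul_add, smul_neg]
  abel

theorem neg_Dirac_sub_mul_eV (hA : ∀ k, Dirac A k = c • B k) (hB : ∀ k, Dirac B k = -(c • A k))
    (k : Fin 4 → ℤ) : -Dirac (fun k => A k - B k * eV) k = -(c • ((A k - B k * eV) * eV)) := by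
  rw [Dirac_sub, Dirac_mul_const, hA, hB]
  simp only [sub_mul, mul_assoc, eV_mul_eV, mul_neg_one, neg_mul, smul_mul_assoc, smul_sub, smul_neg]
  abel

end MassSign

theorem neg_Dirac_mul_eV {c : ℂ} {X : (Fin 4 → ℤ) → Cl} (h : ∀ k, -Dirac X k = c • (X k * eV))
    (k : Fin 4 → ℤ) : -Dirac (fun k => X k * eV) k = c • ((X k * eV) * eV) := by
  rw [Dirac_mul_const, ← neg_mul, h, smul_mul_assoc]

theorem add_I_smul_eq_decomp (x y : Cl) :
    x + Complex.I • y = (2⁻¹ : ℂ) • ((x - y * eV) + (x + y * eV))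
      + (Complex.I / 2) • (((x - y * eV) - (x + y * eV)) * eV) := by
  have h : ((x - y * eV) - (x + y * eV)) * eV = -2 • (y * (eV * eV)) := by noncomm_ring
  rw [h, eV_mul_eV, mul_neg_one]
  module

/-- Proposition 3.10: a solution `Ω = A + iB` of the discrete Dirac–Kähler
equation `iDΩ = mΩ` satisfies `Ω = ½(Ω₊+Ω₋) + (i/2)(Ω₊−Ω₋)e`, where the
real-valued forms `Ω₋ = A + Be` and `Ω₋e` satisfy equation (3.17):
`−DΩ = mΩe`, while the real-valued forms `Ω₊ = A − Be` and `Ω₊e` satisfy the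
same equation with the sign of the mass term reversed. -/
theorem stmt_18 (m : ℝ) (Ω A B : (Fin 4 → ℤ) → Cl)
    (hΩeq : ∀ k, Complex.I • Dirac Ω k = (m : ℂ) • Ω k)
    (hA : ∀ k, A k ∈ Algebra.adjoin ℝ (Set.range e))
    (hB : ∀ k, B k ∈ Algebra.adjoin ℝ (Set.range e))
    (hΩ : ∀ k, Ω k = A k + Complex.I • B k) :
    (∀ k, Ω k = (2⁻¹ : ℂ) • ((A k - B k * eV) + (A k + B k * eV))
        + (Complex.I / 2) • (((A k - B k * eV) - (A k + B k * eV)) * eV)) ∧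
    (∀ k, (A k + B k * eV) ∈ Algebra.adjoin ℝ (Set.range e)) ∧
    (∀ k, (A k - B k * eV) ∈ Algebra.adjoin ℝ (Set.range e)) ∧
    (∀ k, -(Dirac (fun k => A k + B k * eV) k) =
      (m : ℂ) • ((A k + B k * eV) * eV)) ∧
    (∀ k, -(Dirac (fun k => (A k + B k * eV) * eV) k) =
      (m : ℂ) • (((A k + B k * eV) * eV) * eV)) ∧
    (∀ k, -(Dirac (fun k => A k - B k * eV) k) =
      -((m : ℂ) • ((A k - B k * eV) * eV))) ∧
    (∀ k, -(Dirac (fun k => (A k - B k * eV) * eV) k) =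
      -((m : ℂ) • (((A k - B k * eV) * eV) * eV))) := by
  obtain rfl : Ω = fun k => A k + Complex.I • B k := funext hΩ
  have hD := Dirac_eq_smul_of_I_smul_Dirac_eq_smul hA hB hΩeq
  have hDA k := (hD k).1
  have hDB k := (hD k).2
  have hminus := neg_Dirac_add_mul_eV hDA hDB
  have hplus k := (neg_Dirac_sub_mul_eV hDA hDB k).trans (neg_smul _ _).symm
  refine ⟨fun k => add_I_smul_eq_decomp _ _, fun k => ?_, fun k => ?_, hminus,
    neg_Dirac_mul_eV hminus, neg_Dirac_sub_mul_eV hDA hDB, fun k => ?_⟩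
  · exact Subalgebra.add_mem _ (hA k) (Subalgebra.mul_mem _ (hB k) eV_mem)
  · exact Subalgebra.sub_mem _ (hA k) (Subalgebra.mul_mem _ (hB k) eV_mem)
  · rw [neg_Dirac_mul_eV hplus, neg_smul]
end
end
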